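/- Let n be a positive integer with n ≡ 0 (mod 4). Then the following equalities of representation numbers of n^2 hold: r7(1,2,2,2,2,2,4; n^2) = r7(1,1,2,2,2,4,4; n^2) = r7(1,1,1,2,4,4,4; n^2), and r7(1,1,1,2,2,2,4; n^2) = r7(1,1,1,1,2,4,4; n^2). -/

import Mathlib

open Finset

/-- The number of representations of `n` by the quadratic form
`a 0 * x 0 ^ 2 + ... + a 6 * x 6 ^ 2`. -/
noncomputable def r7 (a : Fin 7 → ℕ) (n : ℕ) : ℕ :=
  Set.ncard {x : Fin 7 → ℤ | ∑ i, (a i : ℤ) * x i ^ 2 = (n : ℤ)}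

/-!
The counts are compared through three bijective moves on solution sets of diagonal forms:
permuting the variables; substituting `x i = 2 * y i`, which turns the coefficient `c` of `x i`
into `4 * c` on the solutions with `x i` even; and substituting
`(x i, x j) = (y i + y j, y i - y j)`, which turns two equal coefficients `c, c` into `2 * c, 2 * c`
on the solutions with `x i ≡ x j (mod 2)`, because `c (u + v)² + c (u - v)² = 2c u² + 2c v²`.
Splitting counts according to the parities of some variables and applying the moves reduces all
identities to comparisons of counts with `x 0` odd. The identities hold for every `N ≡ 0 (mod 8)`:
since a square is `1 (mod 8)` or `0 (mod 4)` according to its parity, this forces most parities.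
The decisive case is the form `1,1,2,4,4,4,4` with `x 0` odd: there `x 3 ≢ x 4` exactly when
`x 5 ≡ x 6`, so exchanging `(x 3, x 4)` with `(x 5, x 6)` shows that `x 3 ≡ x 4` holds for
exactly half of the solutions.
-/

theorem Fintype.sum_eq_sum_of_eq_off {ι M : Type*} [Fintype ι] [DecidableEq ι] [AddCommMonoid M]
    (s : Finset ι) {f g : ι → M} (hs : ∑ l ∈ s, f l = ∑ l ∈ s, g l)
    (hoff : ∀ l ∉ s, f l = g l) : ∑ l, f l = ∑ l, g l := by
  rw [← sum_add_sum_compl s f, ← sum_add_sum_compl s g, hs]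
  exact congrArg _ (Finset.sum_congr rfl fun l hl => hoff l (mem_compl.1 hl))

theorem Int.parity_sq_emod (x : ℤ) : x % 2 = 0 ∧ x ^ 2 % 4 = 0 ∨ x % 2 = 1 ∧ x ^ 2 % 8 = 1 := by
  have h : x ^ 2 % 8 = (x % 8) ^ 2 % 8 := by rw [pow_two, pow_two, Int.mul_emod]
  have : x % 8 = 0 ∨ x % 8 = 1 ∨ x % 8 = 2 ∨ x % 8 = 3 ∨ x % 8 = 4 ∨ x % 8 = 5 ∨ x % 8 = 6 ∨
    x % 8 = 7 := by omega
  rcases this with h8 | h8 | h8 | h8 | h8 | h8 | h8 | h8 <;>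
    rw [h8] at h <;> norm_num at h <;> omega

section DiagonalForms

variable {k : ℕ}

def diagForm (a : Fin k → ℕ) (x : Fin k → ℤ) : ℤ := ∑ i, (a i : ℤ) * x i ^ 2

noncomputable def repCount (a : Fin k → ℕ) (N : ℤ) (P : (Fin k → ℤ) → Prop) : ℕ :=
  {x | diagForm a x = N ∧ P x}.ncard

theorem diagForm_vec (c₀ c₁ c₂ c₃ c₄ c₅ c₆ : ℕ) (x : Fin 7 → ℤ) :
    diagForm ![c₀, c₁, c₂, c₃, c₄, c₅, c₆] x = c₀ * x 0 ^ 2 + c₁ * x 1 ^ 2 + c₂ * x 2 ^ 2 +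
      c₃ * x 3 ^ 2 + c₄ * x 4 ^ 2 + c₅ * x 5 ^ 2 + c₆ * x 6 ^ 2 :=
  Fin.sum_univ_seven _

theorem r7_eq_repCount (a : Fin 7 → ℕ) (n : ℕ) : r7 a n = repCount a n (fun _ => True) := by
  simp [r7, repCount, diagForm]

theorem finite_setOf_diagForm_eq {a : Fin k → ℕ} (ha : ∀ i, 0 < a i) (N : ℤ) :
    {x | diagForm a x = N}.Finite := by
  refine (Set.Finite.pi fun _ => Set.finite_Icc (-N) N).subset fun x hx i _ => ?_
  have hterm : (a i : ℤ) * x i ^ 2 ≤ N :=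
    hx ▸ single_le_sum (f := fun j => (a j : ℤ) * x j ^ 2) (fun j _ => by positivity) (mem_univ i)
  have : (1 : ℤ) ≤ a i := by exact_mod_cast ha i
  constructor <;> nlinarith [sq_nonneg (x i - 1), sq_nonneg (x i + 1)]

variable {a b : Fin k → ℕ} {N : ℤ} {P R R₁ R₂ : (Fin k → ℤ) → Prop}

theorem repCount_congr (h : ∀ x, diagForm a x = N → (P x ↔ R x)) :
    repCount a N P = repCount a N R :=
  congrArg Set.ncard <| Set.ext fun x => and_congr_right (h x)

theorem repCount_eq_add (ha : ∀ i, 0 < a i) (h : ∀ x, diagForm a x = N → (P x ↔ R₁ x ∨ R₂ x))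
    (hdisj : ∀ x, diagForm a x = N → R₁ x → R₂ x → False) :
    repCount a N P = repCount a N R₁ + repCount a N R₂ := by
  have hfin := finite_setOf_diagForm_eq ha N
  unfold repCount
  rw [← Set.ncard_union_eq _ (hfin.subset fun x hx => hx.1) (hfin.subset fun x hx => hx.1)]
  · congr 1
    ext x
    simp only [Set.mem_ofPred_eq, Set.mem_union]
    constructor
    · rintro ⟨hx, hP⟩
      rcases (h x hx).1 hP with h₁ | h₂
      exacts [.inl ⟨hx, h₁⟩, .inr ⟨hx, h₂⟩]
    · rintro (⟨hx, h₁⟩ | ⟨hx, h₂⟩)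
      exacts [⟨hx, (h x hx).2 (.inl h₁)⟩, ⟨hx, (h x hx).2 (.inr h₂)⟩]
  · exact Set.disjoint_left.2 fun x ⟨hx, h₁⟩ ⟨_, h₂⟩ => hdisj x hx h₁ h₂

theorem repCount_eq_even_add_odd (ha : ∀ i, 0 < a i) (i : Fin k) :
    repCount a N (fun _ => True) =
      repCount a N (fun x => x i % 2 = 0) + repCount a N (fun x => x i % 2 = 1) :=
  repCount_eq_add ha (fun x _ => by simp only [true_iff]; omega) fun x _ h₀ h₁ => by omega

theorem repCount_eq_of_injective (f : (Fin k → ℤ) → Fin k → ℤ) (hf : f.Injective)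
    (hform : ∀ y, diagForm a (f y) = diagForm b y) (hpred : ∀ y, P (f y) ↔ R y)
    (hrange : ∀ x, diagForm a x = N → P x → x ∈ Set.range f) :
    repCount a N P = repCount b N R := by
  unfold repCount
  rw [← Set.ncard_image_of_injective {x | diagForm b x = N ∧ R x} hf]
  congr 1
  ext x
  constructor
  · rintro ⟨hx, hP⟩
    obtain ⟨y, rfl⟩ := hrange x hx hP
    exact ⟨y, ⟨hform y ▸ hx, (hpred y).1 hP⟩, rfl⟩
  · rintro ⟨y, ⟨hy, hR⟩, rfl⟩
    exact ⟨(hform y).trans hy, (hpred y).2 hR⟩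

theorem repCount_perm (σ : Equiv.Perm (Fin k)) (hb : b = a ∘ σ)
    (hpred : ∀ y, P (y ∘ σ.symm) ↔ R y) : repCount a N P = repCount b N R := by
  refine repCount_eq_of_injective (· ∘ σ.symm)
    (fun y y' h => funext fun l => by simpa using congrFun h (σ l)) (fun y => ?_) hpred
    fun x _ _ => ⟨x ∘ σ, by ext; simp⟩
  subst hb
  exact (Equiv.sum_comp σ _).symm.trans (by simp [diagForm])

theorem repCount_double (i : Fin k) (hb : b = Function.update a i (4 * a i))
    (hpred : ∀ y, P (Function.update y i (2 * y i)) ↔ R y)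
    (heven : ∀ x, diagForm a x = N → P x → x i % 2 = 0) : repCount a N P = repCount b N R := by
  refine repCount_eq_of_injective _ (fun y y' h => funext fun l => ?_) (fun y => ?_) hpred
    fun x hx hP => ⟨Function.update x i (x i / 2), funext fun l => ?_⟩
  · have := congrFun h l
    by_cases hl : l = i
    · subst hl
      simpa using this
    · simpa [hl] using this
  · subst hb
    refine Fintype.sum_eq_sum_of_eq_off {i} ?_ fun l hl => ?_
    · simp only [sum_singleton, Function.update_self, Nat.cast_mul, Nat.cast_ofNat]
      ring
    · simp [show l ≠ i by simpa using hl]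
  · have := heven x hx hP
    by_cases hl : l = i
    · subst hl
      simp only [Function.update_self]
      omega
    · simp [hl]

theorem repCount_rotate {i j : Fin k} (hij : i ≠ j) (haij : a i = a j)
    (hb : b = Function.update (Function.update a i (2 * a i)) j (2 * a i))
    (hpred : ∀ y, P (Function.update (Function.update y i (y i + y j)) j (y i - y j)) ↔ R y)
    (hpar : ∀ x, diagForm a x = N → P x → x i % 2 = x j % 2) :
    repCount a N P = repCount b N R := by
  refine repCount_eq_of_injective _ (fun y y' h => funext fun l => ?_) (fun y => ?_) hpred
    fun x hx hP => ⟨Function.update (Function.update x i ((x i + x j) / 2)) j ((x i - x j) / 2),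
      funext fun l => ?_⟩
  · have hi := congrFun h i
    have hj := congrFun h j
    simp only [ne_eq, hij, not_false_eq_true, Function.update_of_ne, Function.update_self] at hi hj
    by_cases hli : l = i
    · subst hli
      omega
    by_cases hlj : l = j
    · subst hlj
      omega
    simpa [hli, hlj] using congrFun h l
  · subst hb
    refine Fintype.sum_eq_sum_of_eq_off {i, j} ?_ fun l hl => ?_
    · simp only [sum_pair hij, haij, ne_eq, hij, not_false_eq_true, Function.update_of_ne,
        Function.update_self, Nat.cast_mul, Nat.cast_ofNat]
      ring
    · simp only [mem_insert, mem_singleton, not_or] at hl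
      simp [hl.1, hl.2]
  · have := hpar x hx hP
    by_cases hli : l = i
    · subst hli
      simp only [ne_eq, hij, not_false_eq_true, Function.update_of_ne, Function.update_self]
      omega
    by_cases hlj : l = j
    · subst hlj
      simp only [ne_eq, hij, not_false_eq_true, Function.update_of_ne, Function.update_self]
      omega
    simp [hli, hlj]

end DiagonalForms

theorem repCount_1222224_eq_1122244 {N : ℤ} (hN : N % 2 = 0) :
    repCount ![1, 2, 2, 2, 2, 2, 4] N (fun _ => True) =
      repCount ![1, 1, 2, 2, 2, 4, 4] N (fun _ => True) :=
  calc repCount ![1, 2, 2, 2, 2, 2, 4] N (fun _ => True)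
      = repCount ![4, 2, 2, 2, 2, 2, 4] N (fun _ => True) :=
        repCount_double 0 (by decide) (fun _ => Iff.rfl) fun x hx _ => by
          rw [diagForm_vec] at hx
          have := Int.parity_sq_emod (x 0)
          omega
    _ = repCount ![2, 2, 2, 2, 2, 4, 4] N (fun _ => True) :=
        repCount_perm (Equiv.swap 0 5) (by decide) fun _ => Iff.rfl
    _ = repCount ![1, 1, 2, 2, 2, 4, 4] N (fun _ => True) :=
        Eq.symm <| repCount_rotate (i := 0) (j := 1) (by decide) rfl (by decide)
          (fun _ => Iff.rfl) fun x hx _ => by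
            rw [diagForm_vec] at hx
            have := Int.parity_sq_emod (x 0)
            have := Int.parity_sq_emod (x 1)
            omega

theorem repCount_1122244_even_eq {N : ℤ} (hN : N % 2 = 0) :
    repCount ![1, 1, 2, 2, 2, 4, 4] N (fun x => x 0 % 2 = 0) =
      repCount ![1, 1, 1, 2, 4, 4, 4] N (fun x => x 0 % 2 = 0) :=
  calc repCount ![1, 1, 2, 2, 2, 4, 4] N (fun x => x 0 % 2 = 0)
      = repCount ![1, 4, 2, 2, 2, 4, 4] N (fun x => x 0 % 2 = 0) :=
        repCount_double 1 (by decide) (fun _ => by simp) fun x hx h0 => by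
          rw [diagForm_vec] at hx
          have := Int.parity_sq_emod (x 0)
          have := Int.parity_sq_emod (x 1)
          omega
    _ = repCount ![1, 2, 2, 2, 4, 4, 4] N (fun x => x 0 % 2 = 0) :=
        repCount_perm (Equiv.swap 1 4) (by decide) fun _ => by simp [Equiv.swap_apply_def]
    _ = repCount ![1, 1, 1, 2, 4, 4, 4] N (fun x => x 0 % 2 = 0) :=
        Eq.symm <| repCount_rotate (i := 1) (j := 2) (by decide) rfl (by decide)
          (fun _ => by simp) fun x hx h0 => by
            rw [diagForm_vec] at hx
            have := Int.parity_sq_emod (x 0)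
            have := Int.parity_sq_emod (x 1)
            have := Int.parity_sq_emod (x 2)
            omega

theorem repCount_1124444_odd {N : ℤ} (hN : N % 8 = 0) :
    repCount ![1, 1, 2, 4, 4, 4, 4] N (fun x => x 0 % 2 = 1) =
      2 * repCount ![1, 1, 2, 4, 4, 4, 4] N (fun x => x 0 % 2 = 1 ∧ x 3 % 2 = x 4 % 2) := by
  have hswap : repCount ![1, 1, 2, 4, 4, 4, 4] N (fun x => x 0 % 2 = 1 ∧ x 5 % 2 = x 6 % 2) =
      repCount ![1, 1, 2, 4, 4, 4, 4] N (fun x => x 0 % 2 = 1 ∧ x 3 % 2 = x 4 % 2) :=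
    calc _ = repCount ![1, 1, 2, 4, 4, 4, 4] N (fun x => x 0 % 2 = 1 ∧ x 3 % 2 = x 6 % 2) :=
          repCount_perm (Equiv.swap 3 5) (by decide) fun _ => by simp [Equiv.swap_apply_def]
      _ = _ := repCount_perm (Equiv.swap 4 6) (by decide) fun _ => by simp [Equiv.swap_apply_def]
  rw [two_mul]
  nth_rw 2 [← hswap]
  refine repCount_eq_add (by decide) (fun x hx => ?_) fun x hx _ _ => ?_
  all_goals
    rw [diagForm_vec] at hx
    have := Int.parity_sq_emod (x 0)
    have := Int.parity_sq_emod (x 1)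
    have := Int.parity_sq_emod (x 2)
    have := Int.parity_sq_emod (x 3)
    have := Int.parity_sq_emod (x 4)
    have := Int.parity_sq_emod (x 5)
    have := Int.parity_sq_emod (x 6)
    omega

theorem repCount_1122244_odd {N : ℤ} (hN : N % 8 = 0) :
    repCount ![1, 1, 2, 2, 2, 4, 4] N (fun x => x 0 % 2 = 1) =
      2 * repCount ![1, 1, 2, 4, 4, 4, 4] N (fun x => x 0 % 2 = 1) := by
  have hsame : repCount ![1, 1, 2, 2, 2, 4, 4] N (fun x => x 0 % 2 = 1 ∧ x 3 % 2 = x 4 % 2) =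
      repCount ![1, 1, 2, 4, 4, 4, 4] N (fun x => x 0 % 2 = 1) :=
    repCount_rotate (i := 3) (j := 4) (by decide) rfl (by decide)
      (fun _ => by
        simp only [ne_eq, Fin.reduceEq, not_false_eq_true, Function.update_of_ne,
          Function.update_self]
        omega)
      fun _ _ h => h.2
  have hdiff : repCount ![1, 1, 2, 2, 2, 4, 4] N
      (fun x => x 0 % 2 = 1 ∧ x 2 % 2 = 0 ∧ x 3 % 2 = 0) =
      repCount ![1, 1, 2, 4, 4, 4, 4] N (fun x => x 0 % 2 = 1 ∧ x 3 % 2 = x 4 % 2) :=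
    calc _ = repCount ![1, 1, 4, 4, 2, 4, 4] N (fun x => x 0 % 2 = 1 ∧ x 2 % 2 = x 3 % 2) :=
          repCount_rotate (i := 2) (j := 3) (by decide) rfl (by decide)
            (fun _ => by
              simp only [ne_eq, Fin.reduceEq, not_false_eq_true, Function.update_of_ne,
                Function.update_self]
              omega)
            fun _ _ h => by omega
      _ = _ := repCount_perm (Equiv.swap 2 4) (by decide) fun _ => by
          simp only [Function.comp_apply, Equiv.symm_swap, Equiv.swap_apply_def, Fin.reduceEq,
            if_false, if_true]
          omega
  have hswap : repCount ![1, 1, 2, 2, 2, 4, 4] N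
      (fun x => x 0 % 2 = 1 ∧ x 2 % 2 = 0 ∧ x 4 % 2 = 0) =
      repCount ![1, 1, 2, 2, 2, 4, 4] N (fun x => x 0 % 2 = 1 ∧ x 2 % 2 = 0 ∧ x 3 % 2 = 0) :=
    repCount_perm (Equiv.swap 3 4) (by decide) fun _ => by simp [Equiv.swap_apply_def]
  have hsplit : repCount ![1, 1, 2, 2, 2, 4, 4] N (fun x => x 0 % 2 = 1) =
      repCount ![1, 1, 2, 2, 2, 4, 4] N (fun x => x 0 % 2 = 1 ∧ x 3 % 2 = x 4 % 2) +
        repCount ![1, 1, 2, 2, 2, 4, 4] N (fun x => x 0 % 2 = 1 ∧ x 3 % 2 ≠ x 4 % 2) :=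
    repCount_eq_add (by decide) (fun x _ => by tauto) fun x _ h₁ h₂ => h₂.2 h₁.2
  -- `x 0`, `x 1` odd leave an odd number of odd `x 2, x 3, x 4`
  have hsplit' : repCount ![1, 1, 2, 2, 2, 4, 4] N (fun x => x 0 % 2 = 1 ∧ x 3 % 2 ≠ x 4 % 2) =
      repCount ![1, 1, 2, 2, 2, 4, 4] N (fun x => x 0 % 2 = 1 ∧ x 2 % 2 = 0 ∧ x 3 % 2 = 0) +
        repCount ![1, 1, 2, 2, 2, 4, 4] N
          (fun x => x 0 % 2 = 1 ∧ x 2 % 2 = 0 ∧ x 4 % 2 = 0) := by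
    refine repCount_eq_add (by decide) (fun x hx => ?_) fun x hx _ _ => ?_
    all_goals
      rw [diagForm_vec] at hx
      have := Int.parity_sq_emod (x 0)
      have := Int.parity_sq_emod (x 1)
      have := Int.parity_sq_emod (x 2)
      have := Int.parity_sq_emod (x 3)
      have := Int.parity_sq_emod (x 4)
      omega
  have hhalf := repCount_1124444_odd hN
  omega

theorem repCount_1112444_odd {N : ℤ} (hN : N % 2 = 0) :
    repCount ![1, 1, 1, 2, 4, 4, 4] N (fun x => x 0 % 2 = 1) =
      2 * repCount ![1, 1, 2, 4, 4, 4, 4] N (fun x => x 0 % 2 = 1) := by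
  have hdouble : repCount ![1, 1, 1, 2, 4, 4, 4] N (fun x => x 0 % 2 = 1 ∧ x 2 % 2 = 0) =
      repCount ![1, 1, 2, 4, 4, 4, 4] N (fun x => x 0 % 2 = 1) :=
    calc _ = repCount ![1, 1, 4, 2, 4, 4, 4] N (fun x => x 0 % 2 = 1) :=
          repCount_double 2 (by decide) (fun _ => by simp) fun _ _ h => h.2
      _ = _ := repCount_perm (Equiv.swap 2 3) (by decide) fun _ => by simp [Equiv.swap_apply_def]
  have hswap : repCount ![1, 1, 1, 2, 4, 4, 4] N (fun x => x 0 % 2 = 1 ∧ x 1 % 2 = 0) =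
      repCount ![1, 1, 1, 2, 4, 4, 4] N (fun x => x 0 % 2 = 1 ∧ x 2 % 2 = 0) :=
    repCount_perm (Equiv.swap 1 2) (by decide) fun _ => by simp [Equiv.swap_apply_def]
  have hsplit : repCount ![1, 1, 1, 2, 4, 4, 4] N (fun x => x 0 % 2 = 1) =
      repCount ![1, 1, 1, 2, 4, 4, 4] N (fun x => x 0 % 2 = 1 ∧ x 2 % 2 = 0) +
        repCount ![1, 1, 1, 2, 4, 4, 4] N (fun x => x 0 % 2 = 1 ∧ x 1 % 2 = 0) := by
    refine repCount_eq_add (by decide) (fun x hx => ?_) fun x hx _ _ => ?_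
    all_goals
      rw [diagForm_vec] at hx
      have := Int.parity_sq_emod (x 0)
      have := Int.parity_sq_emod (x 1)
      have := Int.parity_sq_emod (x 2)
      omega
  omega

theorem repCount_1122244_eq_1112444 {N : ℤ} (hN : N % 8 = 0) :
    repCount ![1, 1, 2, 2, 2, 4, 4] N (fun _ => True) =
      repCount ![1, 1, 1, 2, 4, 4, 4] N (fun _ => True) := by
  have hN2 : N % 2 = 0 := by omega
  rw [repCount_eq_even_add_odd (by decide) 0, repCount_eq_even_add_odd (by decide) 0,
    repCount_1122244_even_eq hN2, repCount_1122244_odd hN, repCount_1112444_odd hN2]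

theorem repCount_1112224_eq {N : ℤ} (hN : N % 2 = 0) :
    repCount ![1, 1, 1, 2, 2, 2, 4] N (fun _ => True) =
      repCount ![1, 1, 2, 2, 2, 4, 4] N (fun _ => True) +
        2 * repCount ![1, 1, 2, 2, 2, 4, 4] N (fun x => x 0 % 2 = 1) := by
  have heven : repCount ![1, 1, 1, 2, 2, 2, 4] N (fun x => x 2 % 2 = 0) =
      repCount ![1, 1, 2, 2, 2, 4, 4] N (fun _ => True) :=
    calc _ = repCount ![1, 1, 4, 2, 2, 2, 4] N (fun _ => True) :=
          repCount_double 2 (by decide) (fun _ => by simp) fun _ _ h => h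
      _ = _ := repCount_perm (Equiv.swap 2 5) (by decide) fun _ => Iff.rfl
  have hdouble : repCount ![1, 1, 1, 2, 2, 2, 4] N (fun x => x 0 % 2 = 1 ∧ x 2 % 2 = 0) =
      repCount ![1, 1, 2, 2, 2, 4, 4] N (fun x => x 0 % 2 = 1) :=
    calc _ = repCount ![1, 1, 4, 2, 2, 2, 4] N (fun x => x 0 % 2 = 1) :=
          repCount_double 2 (by decide) (fun _ => by simp) fun _ _ h => h.2
      _ = _ := repCount_perm (Equiv.swap 2 5) (by decide) fun _ => by simp [Equiv.swap_apply_def]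
  have hswap₀₂ : repCount ![1, 1, 1, 2, 2, 2, 4] N (fun x => x 2 % 2 = 1) =
      repCount ![1, 1, 1, 2, 2, 2, 4] N (fun x => x 0 % 2 = 1) :=
    repCount_perm (Equiv.swap 0 2) (by decide) fun _ => by simp
  have hswap₁₂ : repCount ![1, 1, 1, 2, 2, 2, 4] N (fun x => x 0 % 2 = 1 ∧ x 1 % 2 = 0) =
      repCount ![1, 1, 1, 2, 2, 2, 4] N (fun x => x 0 % 2 = 1 ∧ x 2 % 2 = 0) :=
    repCount_perm (Equiv.swap 1 2) (by decide) fun _ => by simp [Equiv.swap_apply_def]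
  have hsplit : repCount ![1, 1, 1, 2, 2, 2, 4] N (fun x => x 0 % 2 = 1) =
      repCount ![1, 1, 1, 2, 2, 2, 4] N (fun x => x 0 % 2 = 1 ∧ x 2 % 2 = 0) +
        repCount ![1, 1, 1, 2, 2, 2, 4] N (fun x => x 0 % 2 = 1 ∧ x 1 % 2 = 0) := by
    refine repCount_eq_add (by decide) (fun x hx => ?_) fun x hx _ _ => ?_
    all_goals
      rw [diagForm_vec] at hx
      have := Int.parity_sq_emod (x 0)
      have := Int.parity_sq_emod (x 1)
      have := Int.parity_sq_emod (x 2)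
      omega
  rw [repCount_eq_even_add_odd (by decide) 2]
  omega

theorem repCount_1111244_eq {N : ℤ} (hN : N % 2 = 0) :
    repCount ![1, 1, 1, 1, 2, 4, 4] N (fun _ => True) =
      repCount ![1, 1, 1, 2, 4, 4, 4] N (fun _ => True) +
        repCount ![1, 1, 1, 2, 4, 4, 4] N (fun x => x 0 % 2 = 1) +
          repCount ![1, 1, 2, 2, 2, 4, 4] N (fun x => x 0 % 2 = 1) := by
  have heven : repCount ![1, 1, 1, 1, 2, 4, 4] N (fun x => x 3 % 2 = 0) =
      repCount ![1, 1, 1, 2, 4, 4, 4] N (fun _ => True) :=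
    calc _ = repCount ![1, 1, 1, 4, 2, 4, 4] N (fun _ => True) :=
          repCount_double 3 (by decide) (fun _ => by simp) fun _ _ h => h
      _ = _ := repCount_perm (Equiv.swap 3 4) (by decide) fun _ => Iff.rfl
  have hoddEven : repCount ![1, 1, 1, 1, 2, 4, 4] N (fun x => x 0 % 2 = 1 ∧ x 3 % 2 = 0) =
      repCount ![1, 1, 1, 2, 4, 4, 4] N (fun x => x 0 % 2 = 1) :=
    calc _ = repCount ![1, 1, 1, 4, 2, 4, 4] N (fun x => x 0 % 2 = 1) :=
          repCount_double 3 (by decide) (fun _ => by simp) fun _ _ h => h.2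
      _ = _ := repCount_perm (Equiv.swap 3 4) (by decide) fun _ => by simp [Equiv.swap_apply_def]
  have hoddOdd : repCount ![1, 1, 1, 1, 2, 4, 4] N (fun x => x 0 % 2 = 1 ∧ x 3 % 2 = 1) =
      repCount ![1, 1, 2, 2, 2, 4, 4] N (fun x => x 0 % 2 = 1) :=
    calc _ = repCount ![1, 2, 2, 1, 2, 4, 4] N (fun x => x 0 % 2 = 1 ∧ x 3 % 2 = 1) :=
          repCount_rotate (i := 1) (j := 2) (by decide) rfl (by decide) (fun _ => by simp)
            fun x hx h => by
              rw [diagForm_vec] at hx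
              have := Int.parity_sq_emod (x 0)
              have := Int.parity_sq_emod (x 1)
              have := Int.parity_sq_emod (x 2)
              have := Int.parity_sq_emod (x 3)
              omega
      _ = repCount ![1, 1, 2, 2, 2, 4, 4] N (fun x => x 0 % 2 = 1 ∧ x 1 % 2 = 1) :=
          repCount_perm (Equiv.swap 1 3) (by decide) fun _ => by simp [Equiv.swap_apply_def]
      _ = _ := repCount_congr fun x hx => by
          rw [diagForm_vec] at hx
          have := Int.parity_sq_emod (x 0)
          have := Int.parity_sq_emod (x 1)
          omega
  have hswap : repCount ![1, 1, 1, 1, 2, 4, 4] N (fun x => x 3 % 2 = 1) =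
      repCount ![1, 1, 1, 1, 2, 4, 4] N (fun x => x 0 % 2 = 1) :=
    repCount_perm (Equiv.swap 0 3) (by decide) fun _ => by simp
  have hsplit : repCount ![1, 1, 1, 1, 2, 4, 4] N (fun x => x 0 % 2 = 1) =
      repCount ![1, 1, 1, 1, 2, 4, 4] N (fun x => x 0 % 2 = 1 ∧ x 3 % 2 = 0) +
        repCount ![1, 1, 1, 1, 2, 4, 4] N (fun x => x 0 % 2 = 1 ∧ x 3 % 2 = 1) :=
    repCount_eq_add (by decide) (fun x _ => by omega) fun x _ h₁ h₂ => by omega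
  rw [repCount_eq_even_add_odd (by decide) 3]
  omega

theorem repCount_1112224_eq_1111244 {N : ℤ} (hN : N % 8 = 0) :
    repCount ![1, 1, 1, 2, 2, 2, 4] N (fun _ => True) =
      repCount ![1, 1, 1, 1, 2, 4, 4] N (fun _ => True) := by
  have hN2 : N % 2 = 0 := by omega
  rw [repCount_1112224_eq hN2, repCount_1111244_eq hN2, repCount_1122244_eq_1112444 hN,
    repCount_1122244_odd hN, repCount_1112444_odd hN2]
  ring

theorem stmt18_general (n : ℕ) (h4 : n % 4 = 0) :
    (r7 ![1, 2, 2, 2, 2, 2, 4] (n ^ 2) = r7 ![1, 1, 2, 2, 2, 4, 4] (n ^ 2) ∧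
     r7 ![1, 1, 2, 2, 2, 4, 4] (n ^ 2) = r7 ![1, 1, 1, 2, 4, 4, 4] (n ^ 2)) ∧
    r7 ![1, 1, 1, 2, 2, 2, 4] (n ^ 2) = r7 ![1, 1, 1, 1, 2, 4, 4] (n ^ 2) := by
  obtain ⟨m, rfl⟩ : 4 ∣ n := Nat.dvd_of_mod_eq_zero h4
  have h8 : (((4 * m) ^ 2 : ℕ) : ℤ) % 8 = 0 := by
    push_cast
    ring_nf
    omega
  simp only [r7_eq_repCount]
  exact ⟨⟨repCount_1222224_eq_1122244 (by omega), repCount_1122244_eq_1112444 h8⟩,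
    repCount_1112224_eq_1111244 h8⟩

theorem stmt18 (n : ℕ) (hn : 0 < n) (h4 : n % 4 = 0) :
    (r7 ![1, 2, 2, 2, 2, 2, 4] (n ^ 2) = r7 ![1, 1, 2, 2, 2, 4, 4] (n ^ 2) ∧
     r7 ![1, 1, 2, 2, 2, 4, 4] (n ^ 2) = r7 ![1, 1, 1, 2, 4, 4, 4] (n ^ 2)) ∧
    r7 ![1, 1, 1, 2, 2, 2, 4] (n ^ 2) = r7 ![1, 1, 1, 1, 2, 4, 4] (n ^ 2) :=
  stmt18_general n h4
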